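/- Let T, S ∈ B(H) with T ≥_A 0 and S ≥_A 0 (i.e., AT ≥ 0 and AS ≥ 0). Then ‖T − S‖_A ≤ max{‖T‖_A, ‖S‖_A}. -/

import Mathlib

/-!
Factor the `A`-semi-inner product as `⟪A u, v⟫ = ⟪B u, B v⟫`. The operators `T`, `S` with
`A T ≥ 0`, `A S ≥ 0` are symmetric for this form. For a symmetric `K`, Cauchy–Schwarz gives
`‖B (K y)‖² ≤ ‖B (K² y)‖ ‖B y‖`; iterating along `K^(2^n)` and comparing with the crude bound
`‖B‖ ‖K‖^(2^n) ‖x‖` yields `‖K x‖_A ≤ ‖K‖ ‖x‖_A`, so `‖K‖_A` is a genuine bound and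
`0 ≤ re⟪A K z, z⟫ ≤ ‖K‖_A ‖z‖_A²` for `K = T, S`. Hence the quadratic form of the symmetric
operator `T - S` is bounded by `max ‖T‖_A ‖S‖_A` in absolute value, and by polarization and the
parallelogram law so is `‖T - S‖_A`.
-/

open ContinuousLinearMap

/-- The `A`-seminorm of a vector: `‖x‖_A = √⟨Ax, x⟩`. -/
noncomputable def vnormA {H : Type*} [NormedAddCommGroup H] [InnerProductSpace ℂ H]
    (A : H →L[ℂ] H) (x : H) : ℝ :=
  Real.sqrt (RCLike.re (inner ℂ (A x) x : ℂ))

/-- `T` is `A`-bounded, i.e. `T ∈ B_{A^{1/2}}(H)`. -/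
def ABounded {H : Type*} [NormedAddCommGroup H] [InnerProductSpace ℂ H]
    (A T : H →L[ℂ] H) : Prop :=
  ∃ c : ℝ, 0 < c ∧ ∀ x, vnormA A (T x) ≤ c * vnormA A x

/-- The `A`-operator seminorm `‖T‖_A = sup{‖Tx‖_A : ‖x‖_A = 1}`. -/
noncomputable def opNormA {H : Type*} [NormedAddCommGroup H] [InnerProductSpace ℂ H]
    (A T : H →L[ℂ] H) : ℝ :=
  sSup {c : ℝ | ∃ x : H, vnormA A x = 1 ∧ c = vnormA A (T x)}

/-- The `A`-numerical radius `ω_A(T) = sup{|⟨ATx, x⟩| : ‖x‖_A = 1}`. -/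
noncomputable def wA {H : Type*} [NormedAddCommGroup H] [InnerProductSpace ℂ H]
    (A T : H →L[ℂ] H) : ℝ :=
  sSup {c : ℝ | ∃ x : H, vnormA A x = 1 ∧ c = ‖(inner ℂ (A (T x)) x : ℂ)‖}

/-- `Ts` is the reduced (Douglas) solution of `AX = T*A`, i.e. `Ts = T^{♯_A}`. -/
def IsReducedAdjoint {H : Type*} [NormedAddCommGroup H] [InnerProductSpace ℂ H]
    [CompleteSpace H] (A T Ts : H →L[ℂ] H) : Prop :=
  A ∘L Ts = (ContinuousLinearMap.adjoint T) ∘L A ∧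
    ∀ y, Ts y ∈ closure (Set.range A)

/-- The `2 × 2` operator matrix `[[P, Q], [R, S]]` acting on `H ⊕ H` (with the `ℓ²` product
inner product). -/
noncomputable def blk {H : Type*} [NormedAddCommGroup H] [InnerProductSpace ℂ H]
    (P Q R S : H →L[ℂ] H) : WithLp 2 (H × H) →L[ℂ] WithLp 2 (H × H) :=
  letI e := (WithLp.prodContinuousLinearEquiv 2 ℂ H H)
  (e.symm.toContinuousLinearMap) ∘L
    ((P.comp (fst ℂ H H) + Q.comp (snd ℂ H H)).prod
      (R.comp (fst ℂ H H) + S.comp (snd ℂ H H))) ∘L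
    (e.toContinuousLinearMap)

/-- `𝔸 = diag(A, A)` on `H ⊕ H`. -/
noncomputable def AA {H : Type*} [NormedAddCommGroup H] [InnerProductSpace ℂ H]
    (A : H →L[ℂ] H) : WithLp 2 (H × H) →L[ℂ] WithLp 2 (H × H) :=
  blk A 0 0 A

open scoped InnerProductSpace
open Filter Topology

theorem pow_two_pow_le_mul_pow_sub_one {a : ℕ → ℝ} {u : ℝ} (ha : ∀ n, 0 ≤ a n) (hu : 0 ≤ u)
    (h : ∀ n, a n ^ 2 ≤ a (n + 1) * u) (n : ℕ) : a 0 ^ 2 ^ n ≤ a n * u ^ (2 ^ n - 1) := by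
  induction n with
  | zero => simp
  | succ n ih =>
    have hexp : 2 ^ (n + 1) - 1 = (2 ^ n - 1) * 2 + 1 := by
      have := Nat.one_le_two_pow (n := n)
      rw [pow_succ]
      omega
    calc a 0 ^ 2 ^ (n + 1) = (a 0 ^ 2 ^ n) ^ 2 := by rw [pow_succ, pow_mul]
      _ ≤ (a n * u ^ (2 ^ n - 1)) ^ 2 := by gcongr; exact pow_nonneg (ha 0) _
      _ = a n ^ 2 * u ^ ((2 ^ n - 1) * 2) := by rw [mul_pow, pow_mul]
      _ ≤ a (n + 1) * u * u ^ ((2 ^ n - 1) * 2) := by gcongr; exact h n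
      _ = a (n + 1) * u ^ (2 ^ (n + 1) - 1) := by rw [hexp, pow_succ]; ring

theorem le_of_forall_pow_le_mul_pow {a b C : ℝ} {k : ℕ → ℕ} (hb : 0 ≤ b)
    (hk : Tendsto k atTop atTop) (h : ∀ n, a ^ k n ≤ C * b ^ k n) : a ≤ b := by
  by_contra! hba
  have ha : 0 < a := hb.trans_lt hba
  have hlim : Tendsto (fun n => C * (b / a) ^ k n) atTop (𝓝 0) := by
    simpa using ((tendsto_pow_atTop_nhds_zero_of_lt_one (div_nonneg hb ha.le)
      ((div_lt_one ha).2 hba)).comp hk).const_mul C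
  obtain ⟨n, hn⟩ := (hlim.eventually (gt_mem_nhds one_pos)).exists
  have hpow : 0 < a ^ k n := pow_pos ha _
  rw [div_pow, ← mul_div_assoc, div_lt_one hpow] at hn
  exact (h n).not_gt hn

section

variable {H E : Type*} [NormedAddCommGroup H] [InnerProductSpace ℂ H]
  [NormedAddCommGroup E] [InnerProductSpace ℂ E]

/-- Symmetry of `K` for the semi-inner product `(u, v) ↦ ⟪B u, B v⟫`; when `A = B† B` this is
the `A`-selfadjointness `A K = K† A`. -/
def IsSymmetricWrt (B : H →L[ℂ] E) (K : H →L[ℂ] H) : Prop :=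
  ∀ u v, ⟪B (K u), B v⟫_ℂ = ⟪B u, B (K v)⟫_ℂ

theorem norm_map_inv_norm_smul {B : H →L[ℂ] E} {x : H} (hx : 0 < ‖B x‖) :
    ‖B ((‖B x‖ : ℂ)⁻¹ • x)‖ = 1 := by
  rw [map_smul, norm_smul, norm_inv, Complex.norm_real, Real.norm_of_nonneg hx.le,
    inv_mul_cancel₀ hx.ne']

namespace IsSymmetricWrt

variable {B : H →L[ℂ] E} {K L : H →L[ℂ] H}

theorem pow (hK : IsSymmetricWrt B K) (n : ℕ) : IsSymmetricWrt B (K ^ n) := by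
  induction n with
  | zero => intro u v; simp
  | succ n ih =>
    intro u v
    have hcomm : (K ^ (n + 1)) v = K ((K ^ n) v) := by rw [pow_succ']; rfl
    show ⟪B ((K ^ n) (K u)), B v⟫_ℂ = _
    rw [hcomm, ih, hK]

theorem sub (hK : IsSymmetricWrt B K) (hL : IsSymmetricWrt B L) : IsSymmetricWrt B (K - L) := by
  intro u v
  simp only [sub_apply, map_sub, inner_sub_left, inner_sub_right, hK u v, hL u v]

theorem norm_apply_sq_le (hK : IsSymmetricWrt B K) (x : H) :
    ‖B (K x)‖ ^ 2 ≤ ‖B (K (K x))‖ * ‖B x‖ := by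
  rw [← inner_self_eq_norm_sq (𝕜 := ℂ), ← hK]
  exact re_inner_le_norm _ _

theorem norm_apply_le (hK : IsSymmetricWrt B K) (x : H) : ‖B (K x)‖ ≤ ‖K‖ * ‖B x‖ := by
  set u := ‖B x‖
  set a : ℕ → ℝ := fun n => ‖B ((K ^ 2 ^ n) x)‖
  have ha : ∀ n, a n ^ 2 ≤ a (n + 1) * u := fun n => by
    have hsq : (K ^ 2 ^ n) ((K ^ 2 ^ n) x) = (K ^ 2 ^ (n + 1)) x := by
      show (K ^ 2 ^ n * K ^ 2 ^ n) x = _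
      rw [← pow_add, ← two_mul, pow_succ']
    simpa only [a, hsq] using (hK.pow (2 ^ n)).norm_apply_sq_le x
  have ha0 : a 0 = ‖B (K x)‖ := by simp [a]
  rcases (show 0 ≤ u from norm_nonneg _).eq_or_lt with hu | hu
  · have : a 0 ^ 2 ≤ 0 := by simpa only [← hu, mul_zero] using ha 0
    rw [← ha0, ← hu, mul_zero]
    nlinarith [norm_nonneg (B (K x))]
  have hcrude : ∀ n, a n ≤ ‖B‖ * ‖x‖ * ‖K‖ ^ 2 ^ n := fun n =>
    calc a n ≤ ‖B‖ * (‖K ^ 2 ^ n‖ * ‖x‖) :=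
        (B.le_opNorm _).trans (by gcongr; exact le_opNorm _ _)
      _ ≤ ‖B‖ * (‖K‖ ^ 2 ^ n * ‖x‖) := by gcongr; exact norm_pow_le' K (by positivity)
      _ = ‖B‖ * ‖x‖ * ‖K‖ ^ 2 ^ n := by ring
  refine le_of_forall_pow_le_mul_pow (C := ‖B‖ * ‖x‖ / u) (by positivity)
    (tendsto_pow_atTop_atTop_of_one_lt one_lt_two) fun n => ?_
  calc ‖B (K x)‖ ^ 2 ^ n = a 0 ^ 2 ^ n := by rw [ha0]
    _ ≤ a n * u ^ (2 ^ n - 1) :=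
      pow_two_pow_le_mul_pow_sub_one (fun _ => norm_nonneg _) hu.le ha n
    _ ≤ ‖B‖ * ‖x‖ * ‖K‖ ^ 2 ^ n * u ^ (2 ^ n - 1) := by gcongr; exact hcrude n
    _ = ‖B‖ * ‖x‖ / u * (‖K‖ * u) ^ 2 ^ n := by
      rw [mul_pow, ← mul_pow_sub_one (pow_ne_zero n two_ne_zero) u]
      field_simp

theorem four_mul_re_inner (hK : IsSymmetricWrt B K) (x y : H) :
    4 * RCLike.re ⟪B (K x), B y⟫_ℂ =
      RCLike.re ⟪B (K (x + y)), B (x + y)⟫_ℂ - RCLike.re ⟪B (K (x - y)), B (x - y)⟫_ℂ := by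
  have hsymm : RCLike.re ⟪B (K y), B x⟫_ℂ = RCLike.re ⟪B (K x), B y⟫_ℂ := by
    rw [hK, ← inner_conj_symm, RCLike.conj_re]
  simp only [map_add, map_sub, inner_add_left, inner_add_right, inner_sub_left, inner_sub_right,
    hsymm]
  ring

theorem norm_apply_le_of_abs_re_inner_le (hK : IsSymmetricWrt B K) {M : ℝ}
    (hM : ∀ z, |RCLike.re ⟪B (K z), B z⟫_ℂ| ≤ M * ‖B z‖ ^ 2) {x : H} (hx : ‖B x‖ = 1) :
    ‖B (K x)‖ ≤ M := by
  rcases (norm_nonneg (B (K x))).eq_or_lt with h0 | hpos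
  · simpa [← h0, hx] using (abs_nonneg _).trans (hM x)
  set y : H := ((‖B (K x)‖ : ℂ))⁻¹ • K x
  have hy : ‖B y‖ = 1 := norm_map_inv_norm_smul hpos
  have hxy : RCLike.re ⟪B (K x), B y⟫_ℂ = ‖B (K x)‖ := by
    rw [map_smul, inner_smul_right, inner_self_eq_norm_sq_to_K]
    simp [sq, hpos.ne']
  have hpar : ‖B (x + y)‖ ^ 2 + ‖B (x - y)‖ ^ 2 = 4 := by
    have := parallelogram_law_with_norm ℂ (B x) (B y)
    rw [map_add, map_sub, this, hx, hy]
    norm_num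
  have hplus := le_of_abs_le (hM (x + y))
  have hminus := neg_le_of_abs_le (hM (x - y))
  nlinarith [hK.four_mul_re_inner x y]

end IsSymmetricWrt

variable {A : H →L[ℂ] H} {B : H →L[ℂ] E}

theorem vnormA_eq_norm (hB : ∀ u v, ⟪A u, v⟫_ℂ = ⟪B u, B v⟫_ℂ) (x : H) : vnormA A x = ‖B x‖ := by
  rw [vnormA, hB, inner_self_eq_norm_sq, Real.sqrt_sq (norm_nonneg _)]

theorem opNormA_nonneg (A T : H →L[ℂ] H) : 0 ≤ opNormA A T :=
  Real.sSup_nonneg fun _ ⟨_, _, h⟩ => h ▸ Real.sqrt_nonneg _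

theorem isSymmetricWrt_of_isPositive_comp (hB : ∀ u v, ⟪A u, v⟫_ℂ = ⟪B u, B v⟫_ℂ)
    {T : H →L[ℂ] H} (hT : (A ∘L T).IsPositive) : IsSymmetricWrt B T := by
  have hA : ∀ u v, ⟪A u, v⟫_ℂ = ⟪u, A v⟫_ℂ := fun u v => by
    rw [hB, ← inner_conj_symm, ← hB, inner_conj_symm]
  intro u v
  rw [← hB, ← hB, hA u]
  exact hT.inner_left_eq_inner_right u v

theorem norm_apply_le_opNormA_mul (hB : ∀ u v, ⟪A u, v⟫_ℂ = ⟪B u, B v⟫_ℂ) {P : H →L[ℂ] H}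
    {c : ℝ} (hc : ∀ x, ‖B (P x)‖ ≤ c * ‖B x‖) (x : H) : ‖B (P x)‖ ≤ opNormA A P * ‖B x‖ := by
  rcases (norm_nonneg (B x)).eq_or_lt with h0 | hpos
  · simpa [← h0] using hc x
  -- `sSup` of a set unbounded above is `0` in `ℝ`, so the bound `c` is essential here.
  have hbdd : BddAbove {c | ∃ x, vnormA A x = 1 ∧ c = vnormA A (P x)} := by
    refine ⟨c, ?_⟩
    rintro _ ⟨z, hz, rfl⟩
    rw [vnormA_eq_norm hB] at hz ⊢
    simpa [hz] using hc z
  have hle : ‖B (P ((‖B x‖ : ℂ)⁻¹ • x))‖ ≤ opNormA A P := by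
    refine le_csSup hbdd ⟨_, ?_, (vnormA_eq_norm hB _).symm⟩
    rw [vnormA_eq_norm hB, norm_map_inv_norm_smul hpos]
  rw [map_smul, map_smul, norm_smul, norm_inv, Complex.norm_real, Real.norm_of_nonneg hpos.le,
    inv_mul_le_iff₀ hpos, mul_comm] at hle
  exact hle

theorem IsSymmetricWrt.re_inner_le_opNormA_mul (hB : ∀ u v, ⟪A u, v⟫_ℂ = ⟪B u, B v⟫_ℂ)
    {K : H →L[ℂ] H} (hK : IsSymmetricWrt B K) (z : H) :
    RCLike.re ⟪B (K z), B z⟫_ℂ ≤ opNormA A K * ‖B z‖ ^ 2 :=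
  calc RCLike.re ⟪B (K z), B z⟫_ℂ ≤ ‖B (K z)‖ * ‖B z‖ := re_inner_le_norm _ _
    _ ≤ opNormA A K * ‖B z‖ * ‖B z‖ := by
      gcongr
      exact norm_apply_le_opNormA_mul hB hK.norm_apply_le z
    _ = opNormA A K * ‖B z‖ ^ 2 := by ring

end

theorem ContinuousLinearMap.IsPositive.exists_inner_eq_inner {H : Type*} [NormedAddCommGroup H]
    [InnerProductSpace ℂ H] [CompleteSpace H] {A : H →L[ℂ] H} (hA : A.IsPositive) :
    ∃ B : H →L[ℂ] H, ∀ u v, ⟪A u, v⟫_ℂ = ⟪B u, B v⟫_ℂ := by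
  obtain ⟨B, rfl⟩ := CStarAlgebra.nonneg_iff_eq_star_mul_self.mp ((nonneg_iff_isPositive A).mpr hA)
  exact ⟨B, fun u v => by rw [star_eq_adjoint]; exact adjoint_inner_left B v (B u)⟩

theorem stmt14 {H : Type*} [NormedAddCommGroup H] [InnerProductSpace ℂ H] [CompleteSpace H]
    (A : H →L[ℂ] H) (hA : A.IsPositive)
    (T S : H →L[ℂ] H) (hT : (A ∘L T).IsPositive) (hS : (A ∘L S).IsPositive) :
    opNormA A (T - S) ≤ max (opNormA A T) (opNormA A S) := by
  obtain ⟨B, hB⟩ := hA.exists_inner_eq_inner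
  have hTB := isSymmetricWrt_of_isPositive_comp hB hT
  have hSB := isSymmetricWrt_of_isPositive_comp hB hS
  have hform : ∀ z, |RCLike.re ⟪B ((T - S) z), B z⟫_ℂ| ≤
      max (opNormA A T) (opNormA A S) * ‖B z‖ ^ 2 := by
    intro z
    have hre {P : H →L[ℂ] H} (hP : (A ∘L P).IsPositive) : 0 ≤ RCLike.re ⟪B (P z), B z⟫_ℂ :=
      hB (P z) z ▸ hP.re_inner_nonneg_left z
    rw [sub_apply, map_sub, inner_sub_left, map_sub]
    refine abs_sub_le_of_nonneg_of_le (hre hT) ?_ (hre hS) ?_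
    · exact (hTB.re_inner_le_opNormA_mul hB z).trans (by gcongr; exact le_max_left _ _)
    · exact (hSB.re_inner_le_opNormA_mul hB z).trans (by gcongr; exact le_max_right _ _)
  refine Real.sSup_le ?_ ((opNormA_nonneg A T).trans (le_max_left _ _))
  rintro _ ⟨x, hx, rfl⟩
  rw [vnormA_eq_norm hB] at hx ⊢
  exact (hTB.sub hSB).norm_apply_le_of_abs_re_inner_le hform hx
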